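/- arXiv:2102.01151 — 5 statements merged into one kernel-verified Lean document; each statement's English description precedes it below -/
import Mathlib

section
/- Let χ : ℝ → ℝ be smooth, even, with χ = 1 on [-1,1], χ = 0 outside [-2,2], and χ' ≤ 0 on [0,∞). For A > 0 define ζ_A(x) = exp(-(1/A)(1-χ(x))|x|). Then there is a constant C, independent of A ≥ 1, such that for all x ∈ ℝ, |ζ_A''(x)/ζ_A(x) - 2(ζ_A'(x)/ζ_A(x))²| ≤ C/A. -/
open Real Filter Topology

theorem stmt5 (χ : ℝ → ℝ) (hχ : ContDiff ℝ (⊤ : ℕ∞) χ) (hχeven : ∀ x, χ (-x) = χ x)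
    (hχ1 : ∀ x ∈ Set.Icc (-1 : ℝ) 1, χ x = 1) (hχ0 : ∀ x : ℝ, 2 ≤ |x| → χ x = 0)
    (hχ' : ∀ x : ℝ, 0 ≤ x → deriv χ x ≤ 0) :
    ∃ C : ℝ, ∀ A : ℝ, 1 ≤ A → ∀ x : ℝ,
      |deriv (deriv (fun y => Real.exp (-(1 / A) * (1 - χ y) * |y|))) x /
          Real.exp (-(1 / A) * (1 - χ x) * |x|) -
        2 * (deriv (fun y => Real.exp (-(1 / A) * (1 - χ y) * |y|)) x /
          Real.exp (-(1 / A) * (1 - χ x) * |x|)) ^ 2| ≤ C / A := by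
  set ψ : ℝ → ℝ := fun x => (1 - χ x) * |x| with hψdef
  have hψ : ContDiff ℝ (⊤ : ℕ∞) ψ := by
    rw [contDiff_iff_contDiffAt]
    intro x
    rcases lt_trichotomy x 0 with hx | hx | hx
    · have he : ψ =ᶠ[𝓝 x] fun y => (1 - χ y) * (-y) := by
        filter_upwards [Iio_mem_nhds hx] with y hy
        rw [hψdef]
        simp [abs_of_neg (Set.mem_Iio.mp hy)]
      exact ((((contDiff_const.sub hχ).mul contDiff_id.neg)).contDiffAt).congr_of_eventuallyEq he
    · subst hx
      have he : ψ =ᶠ[𝓝 (0:ℝ)] fun _ => 0 := by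
        filter_upwards [Ioo_mem_nhds (by norm_num : (-1:ℝ) < 0) (by norm_num : (0:ℝ) < 1)] with y hy
        have h1 := hχ1 y ⟨le_of_lt hy.1, le_of_lt hy.2⟩
        simp [ψ, h1]
      exact contDiffAt_const.congr_of_eventuallyEq he
    · have he : ψ =ᶠ[𝓝 x] fun y => (1 - χ y) * y := by
        filter_upwards [Ioi_mem_nhds hx] with y hy
        rw [hψdef]
        simp [abs_of_pos (Set.mem_Ioi.mp hy)]
      exact ((((contDiff_const.sub hχ).mul contDiff_id)).contDiffAt).congr_of_eventuallyEq he
  have hpsiTop : ContDiff ℝ (⊤ : ℕ∞) ψ := hψ.of_le (by simp)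
  have hψd : Differentiable ℝ ψ := (contDiff_infty_iff_deriv.mp hpsiTop).1
  have hψ' : ContDiff ℝ (⊤ : ℕ∞) (deriv ψ) := (contDiff_infty_iff_deriv.mp hpsiTop).2
  have hψ'd : Differentiable ℝ (deriv ψ) := (contDiff_infty_iff_deriv.mp hψ').1
  have hψ'' : ContDiff ℝ (⊤ : ℕ∞) (deriv (deriv ψ)) := (contDiff_infty_iff_deriv.mp hψ').2
  -- behavior outside [-3,3]
  have hd_pos : ∀ x : ℝ, 2 < x → deriv ψ x = 1 := by
    intro x hx
    have he : ψ =ᶠ[𝓝 x] id := by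
      filter_upwards [Ioi_mem_nhds hx] with y hy
      have hy2 : 2 < y := Set.mem_Ioi.mp hy
      have hy0 : (0:ℝ) < y := by linarith
      have h0 : χ y = 0 := hχ0 y (by rw [abs_of_pos hy0]; linarith)
      simp [ψ, h0, abs_of_pos hy0]
    rw [he.deriv_eq]; exact deriv_id x
  have hd_neg : ∀ x : ℝ, x < -2 → deriv ψ x = -1 := by
    intro x hx
    have he : ψ =ᶠ[𝓝 x] fun y => -y := by
      filter_upwards [Iio_mem_nhds hx] with y hy
      have hy2 : y < -2 := Set.mem_Iio.mp hy
      have hy0 : y < 0 := by linarith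
      have h0 : χ y = 0 := hχ0 y (by rw [abs_of_neg hy0]; linarith)
      simp [ψ, h0, abs_of_neg hy0]
    rw [he.deriv_eq]; simp
  have hdd_pos : ∀ x : ℝ, 2 < x → deriv (deriv ψ) x = 0 := by
    intro x hx
    have he : deriv ψ =ᶠ[𝓝 x] fun _ => (1:ℝ) := by
      filter_upwards [Ioi_mem_nhds hx] with y hy
      exact hd_pos y (Set.mem_Ioi.mp hy)
    rw [he.deriv_eq]; simp
  have hdd_neg : ∀ x : ℝ, x < -2 → deriv (deriv ψ) x = 0 := by
    intro x hx
    have he : deriv ψ =ᶠ[𝓝 x] fun _ => (-1:ℝ) := by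
      filter_upwards [Iio_mem_nhds hx] with y hy
      exact hd_neg y (Set.mem_Iio.mp hy)
    rw [he.deriv_eq]; simp
  -- bounds
  obtain ⟨M₁, hM₁⟩ := (isCompact_Icc (a := (-3:ℝ)) (b := 3)).exists_bound_of_continuousOn
    hψ'.continuous.continuousOn
  obtain ⟨M₂, hM₂⟩ := (isCompact_Icc (a := (-3:ℝ)) (b := 3)).exists_bound_of_continuousOn
    hψ''.continuous.continuousOn
  set B₁ : ℝ := max M₁ 1 with hB₁def
  set B₂ : ℝ := max M₂ 0 with hB₂def
  have hB₁ : ∀ x : ℝ, |deriv ψ x| ≤ B₁ := by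
    intro x
    by_cases hx : x ∈ Set.Icc (-3:ℝ) 3
    · exact le_trans (by simpa [Real.norm_eq_abs] using hM₁ x hx) (le_max_left _ _)
    · rcases lt_or_ge x (-3) with h | h
      · rw [hd_neg x (by linarith)]
        have h1 : |(-1:ℝ)| = 1 := by norm_num
        rw [h1]; exact le_max_right M₁ 1
      · have h3 : 3 < x := by
          simp only [Set.mem_Icc, not_and_or, not_le] at hx
          rcases hx with h' | h' <;> [linarith; exact h']
        rw [hd_pos x (by linarith)]
        have h1 : |(1:ℝ)| = 1 := by norm_num
        rw [h1]; exact le_max_right M₁ 1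
  have hB₂ : ∀ x : ℝ, |deriv (deriv ψ) x| ≤ B₂ := by
    intro x
    by_cases hx : x ∈ Set.Icc (-3:ℝ) 3
    · exact le_trans (by simpa [Real.norm_eq_abs] using hM₂ x hx) (le_max_left _ _)
    · rcases lt_or_ge x (-3) with h | h
      · rw [hdd_neg x (by linarith)]
        have h1 : |(0:ℝ)| = 0 := by norm_num
        rw [h1]; exact le_max_right M₂ 0
      · have h3 : 3 < x := by
          simp only [Set.mem_Icc, not_and_or, not_le] at hx
          rcases hx with h' | h' <;> [linarith; exact h']
        rw [hdd_pos x (by linarith)]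
        have h1 : |(0:ℝ)| = 0 := by norm_num
        rw [h1]; exact le_max_right M₂ 0
  have hB₁0 : 0 < B₁ := lt_max_iff.mpr (Or.inr one_pos)
  have hB₂0 : 0 ≤ B₂ := le_max_right _ _
  refine ⟨B₂ + B₁ ^ 2, ?_⟩
  intro A hA x
  have hA0 : 0 < A := by linarith
  set c : ℝ := -(1 / A) with hcdef
  have hfun : (fun y => Real.exp (-(1 / A) * (1 - χ y) * |y|)) = fun y => Real.exp (c * ψ y) := by
    funext y; rw [hcdef, hψdef]; ring_nf
  have hden : Real.exp (-(1 / A) * (1 - χ x) * |x|) = Real.exp (c * ψ x) := by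
    rw [hcdef, hψdef]; ring_nf
  have hd1 : ∀ y : ℝ, HasDerivAt (fun z => Real.exp (c * ψ z))
      (Real.exp (c * ψ y) * (c * deriv ψ y)) y :=
    fun y => (((hψd y).hasDerivAt.const_mul c)).exp
  have hder1 : deriv (fun y => Real.exp (c * ψ y))
      = fun y => Real.exp (c * ψ y) * (c * deriv ψ y) := funext fun y => (hd1 y).deriv
  have hd2 : HasDerivAt (fun y => Real.exp (c * ψ y) * (c * deriv ψ y))
      (Real.exp (c * ψ x) * (c * deriv ψ x) * (c * deriv ψ x)
        + Real.exp (c * ψ x) * (c * deriv (deriv ψ) x)) x :=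
    (hd1 x).mul ((hψ'd x).hasDerivAt.const_mul c)
  have e1 : deriv (fun y => Real.exp (c * ψ y)) x
      = Real.exp (c * ψ x) * (c * deriv ψ x) := (hd1 x).deriv
  have e2 : deriv (deriv (fun y => Real.exp (c * ψ y))) x
      = Real.exp (c * ψ x) * (c * deriv ψ x) * (c * deriv ψ x)
        + Real.exp (c * ψ x) * (c * deriv (deriv ψ) x) := by
    rw [hder1]; exact hd2.deriv
  rw [hfun, hden, e1, e2]
  have hz : Real.exp (c * ψ x) ≠ 0 := (Real.exp_pos _).ne'
  have key : (Real.exp (c * ψ x) * (c * deriv ψ x) * (c * deriv ψ x)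
        + Real.exp (c * ψ x) * (c * deriv (deriv ψ) x)) / Real.exp (c * ψ x)
      - 2 * (Real.exp (c * ψ x) * (c * deriv ψ x) / Real.exp (c * ψ x)) ^ 2
      = c * deriv (deriv ψ) x - (c * deriv ψ x) ^ 2 := by
    field_simp
    ring
  rw [key]
  have hc : |c| = 1 / A := by
    rw [hcdef, abs_neg, abs_of_pos (by positivity)]
  have h1A : 1 / A ≤ 1 := by
    rw [div_le_one hA0]; exact hA
  calc |c * deriv (deriv ψ) x - (c * deriv ψ x) ^ 2|
      ≤ |c * deriv (deriv ψ) x| + |(c * deriv ψ x) ^ 2| := abs_sub _ _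
    _ = |c| * |deriv (deriv ψ) x| + (|c| * |deriv ψ x|) ^ 2 := by
        rw [abs_mul, abs_pow, abs_mul]
    _ ≤ (1 / A) * B₂ + ((1 / A) * B₁) ^ 2 := by
        rw [hc]
        gcongr
        all_goals first | exact hB₂ x | exact hB₁ x | positivity
    _ ≤ (1 / A) * B₂ + (1 / A) * B₁ ^ 2 := by
        have : ((1 / A) * B₁) ^ 2 = (1/A) * ((1/A) * B₁ ^2) := by ring
        rw [this]
        gcongr
        nlinarith [hB₁0.le, sq_nonneg B₁]
    _ = (B₂ + B₁ ^ 2) / A := by ring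
end

section
/- Let p > 1, Q the soliton of Q'' = Q - Q^p, and ℒ = -∂ₓ² + 1 - pQ^{p-1}. Define u₃(x) = -(2/(p-1))[1 + ((p+1)/2) Q'(x) ∫_ε^x Q(r)^{-1} dr] for x > 0 (any fixed ε ∈ (0,x)). Then ℒ(u₃) = 1 on (0, ∞). -/
open Real

/-!
With `I(x) = ∫_ε^x Q⁻¹`, the product rule `ℒ(fg) = g ℒf - 2f'g' - fg''` gives
`ℒ(Q' I) = I ℒ(Q') - 2Q''/Q + Q'²/Q²`. Differentiating `Q'' = Q - Q^p` shows `ℒ(Q') = 0`, so the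
integral drops out, and the ODE together with the first integral `Q'² = Q² - 2/(p+1) Q^{p+1}`
turns what is left into `ℒ(Q' I) = -1 + (2p/(p+1)) Q^{p-1}`. Its `Q^{p-1}` term cancels the one in
`ℒ1 = 1 - pQ^{p-1}`, leaving `ℒu₃ = -(2/(p-1)) (1-p)/2 = 1`.
-/

noncomputable def linearizedOp (p : ℝ) (Q u : ℝ → ℝ) (x : ℝ) : ℝ :=
  -deriv (deriv u) x + (1 - p * Q x ^ (p - 1)) * u x

/-- The paper's `u₃`. -/
noncomputable def preimageOfOne (p : ℝ) (Q : ℝ → ℝ) (ε y : ℝ) : ℝ :=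
  -(2 / (p - 1)) * (1 + ((p + 1) / 2) * deriv Q y * ∫ r in ε..y, (Q r)⁻¹)

theorem linearizedOp_const_mul_one_add (p : ℝ) (Q w : ℝ → ℝ) (a b x : ℝ) :
    linearizedOp p Q (fun y => a * (1 + b * w y)) x =
      a * (1 - p * Q x ^ (p - 1) + b * linearizedOp p Q w x) := by
  have h : deriv (deriv fun y => a * (1 + b * w y)) = fun y => a * (b * deriv (deriv w) y) := by
    simp only [deriv_const_mul_field', deriv_const_add']
  simp only [linearizedOp, h]
  ring

theorem deriv_deriv_mul {f g : ℝ → ℝ} {x : ℝ} (hf : Differentiable ℝ f) (hg : Differentiable ℝ g)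
    (hf' : DifferentiableAt ℝ (deriv f) x) (hg' : DifferentiableAt ℝ (deriv g) x) :
    deriv (deriv fun y => f y * g y) x =
      deriv (deriv f) x * g x + 2 * (deriv f x * deriv g x) + f x * deriv (deriv g) x := by
  have h : HasDerivAt (deriv fun y => f y * g y)
      (deriv (deriv f) x * g x + deriv f x * deriv g x +
        (deriv f x * deriv g x + f x * deriv (deriv g) x)) x := by
    have hfg : deriv (fun y => f y * g y) = fun y => deriv f y * g y + f y * deriv g y :=
      funext fun y => deriv_mul (hf y) (hg y)
    rw [hfg]
    exact (hf'.hasDerivAt.mul (hg x).hasDerivAt).add ((hf x).hasDerivAt.mul hg'.hasDerivAt)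
  rw [h.deriv]
  ring

theorem linearizedOp_mul (p : ℝ) (Q : ℝ → ℝ) {f g : ℝ → ℝ} {x : ℝ} (hf : Differentiable ℝ f)
    (hg : Differentiable ℝ g) (hf' : DifferentiableAt ℝ (deriv f) x)
    (hg' : DifferentiableAt ℝ (deriv g) x) :
    linearizedOp p Q (fun y => f y * g y) x =
      g x * linearizedOp p Q f x - 2 * (deriv f x * deriv g x) - f x * deriv (deriv g) x := by
  rw [linearizedOp, linearizedOp, deriv_deriv_mul hf hg hf' hg']
  ring

theorem hasDerivAt_integral_inv {Q : ℝ → ℝ} (hQ0 : ∀ x, Q x ≠ 0) (hQ : Continuous Q) (ε x : ℝ) :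
    HasDerivAt (fun y => ∫ r in ε..y, (Q r)⁻¹) (Q x)⁻¹ x :=
  ((hQ.inv₀ hQ0).integral_hasStrictDerivAt ε x).hasDerivAt

section Profile

variable {p : ℝ} {Q : ℝ → ℝ} (hQ0 : ∀ x, Q x ≠ 0) (hQ : Differentiable ℝ Q)
  (hode : ∀ x, deriv (deriv Q) x = Q x - Q x ^ p)
include hQ0 hQ hode

theorem hasDerivAt_deriv_deriv_of_ode (x : ℝ) :
    HasDerivAt (deriv (deriv Q)) (deriv Q x - deriv Q x * p * Q x ^ (p - 1)) x := by
  rw [funext hode]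
  exact (hQ x).hasDerivAt.sub ((hQ x).hasDerivAt.rpow_const (Or.inl (hQ0 x)))

theorem linearizedOp_deriv_eq_zero (x : ℝ) : linearizedOp p Q (deriv Q) x = 0 := by
  rw [linearizedOp, (hasDerivAt_deriv_deriv_of_ode hQ0 hQ hode x).deriv]
  ring

theorem linearizedOp_preimageOfOne (hp₁ : p - 1 ≠ 0) (hp₂ : p + 1 ≠ 0)
    (hQ' : Differentiable ℝ (deriv Q))
    (hint : ∀ x, deriv Q x ^ 2 = Q x ^ 2 - 2 / (p + 1) * Q x ^ (p + 1)) (ε x : ℝ) :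
    linearizedOp p Q (preimageOfOne p Q ε) x = 1 := by
  set I := fun y => ∫ r in ε..y, (Q r)⁻¹
  have hI : ∀ y, HasDerivAt I (Q y)⁻¹ y := hasDerivAt_integral_inv hQ0 hQ.continuous ε
  have hdI : deriv I = fun y => (Q y)⁻¹ := funext fun y => (hI y).deriv
  have hddI : HasDerivAt (deriv I) (-deriv Q x / Q x ^ 2) x := by
    rw [hdI]
    exact (hQ x).hasDerivAt.inv (hQ0 x)
  have hu : preimageOfOne p Q ε =
      fun y => -(2 / (p - 1)) * (1 + ((p + 1) / 2) * (deriv Q y * I y)) := by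
    funext y
    rw [preimageOfOne, mul_assoc ((p + 1) / 2)]
  rw [hu, linearizedOp_const_mul_one_add,
    linearizedOp_mul p Q hQ' (fun y => (hI y).differentiableAt)
      (hasDerivAt_deriv_deriv_of_ode hQ0 hQ hode x).differentiableAt hddI.differentiableAt,
    linearizedOp_deriv_eq_zero hQ0 hQ hode, hddI.deriv, hdI, hode]
  have hint_x := hint x
  rw [rpow_add_one (hQ0 x)] at hint_x
  rw [rpow_sub_one (hQ0 x)]
  have hQx := hQ0 x
  field_simp at hint_x ⊢
  linear_combination (-1) * hint_x

end Profile

noncomputable def soliton (p x : ℝ) : ℝ :=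
  ((p + 1) / (2 * cosh ((p - 1) * x / 2) ^ 2)) ^ (1 / (p - 1))

theorem hasDerivAt_mul_div_two (c x : ℝ) : HasDerivAt (fun y => c * y / 2) (c / 2) x := by
  simpa using ((hasDerivAt_id x).const_mul c).div_const 2

section Soliton

variable {p : ℝ} (hp : 1 < p)
include hp

theorem soliton_pos (x : ℝ) : 0 < soliton p x := by
  have := cosh_pos ((p - 1) * x / 2)
  have : 0 < p + 1 := by linarith
  unfold soliton
  positivity

theorem soliton_rpow_sub_one (x : ℝ) :
    soliton p x ^ (p - 1) = (p + 1) / (2 * cosh ((p - 1) * x / 2) ^ 2) := by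
  have := cosh_pos ((p - 1) * x / 2)
  have : 0 < p + 1 := by linarith
  rw [soliton, ← rpow_mul (by positivity), one_div_mul_cancel (by linarith), rpow_one]

theorem soliton_rpow (x : ℝ) :
    soliton p x ^ p = (p + 1) / (2 * cosh ((p - 1) * x / 2) ^ 2) * soliton p x := by
  rw [← soliton_rpow_sub_one hp, rpow_sub_one (soliton_pos hp x).ne']
  field_simp [(soliton_pos hp x).ne']

theorem hasDerivAt_soliton (x : ℝ) :
    HasDerivAt (soliton p)
      (-(sinh ((p - 1) * x / 2) / cosh ((p - 1) * x / 2)) * soliton p x) x := by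
  have hc := cosh_pos ((p - 1) * x / 2)
  have hp1 : 0 < p + 1 := by linarith
  have hp1' : p - 1 ≠ 0 := by linarith
  have ht := hasDerivAt_mul_div_two (p - 1) x
  have hB := (hasDerivAt_const x (p + 1)).fun_div ((ht.cosh.fun_pow 2).const_mul 2) (by positivity)
  refine (hB.rpow_const (p := 1 / (p - 1)) (Or.inl (by positivity))).congr_deriv ?_
  rw [soliton, rpow_sub_one (by positivity)]
  field_simp
  ring

theorem deriv_soliton :
    deriv (soliton p) = fun x => -(sinh ((p - 1) * x / 2) / cosh ((p - 1) * x / 2)) * soliton p x :=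
  funext fun x => (hasDerivAt_soliton hp x).deriv

theorem differentiable_soliton : Differentiable ℝ (soliton p) :=
  fun x => (hasDerivAt_soliton hp x).differentiableAt

theorem hasDerivAt_deriv_soliton (x : ℝ) :
    HasDerivAt (deriv (soliton p)) (soliton p x - soliton p x ^ p) x := by
  have hc := cosh_pos ((p - 1) * x / 2)
  have ht := hasDerivAt_mul_div_two (p - 1) x
  rw [deriv_soliton hp]
  refine (((ht.sinh.fun_div ht.cosh hc.ne').fun_neg).mul (hasDerivAt_soliton hp x)).congr_deriv ?_
  rw [soliton_rpow hp]
  field_simp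
  linear_combination (p + 1) * soliton p x * sinh_sq ((p - 1) * x / 2)

theorem differentiable_deriv_soliton : Differentiable ℝ (deriv (soliton p)) :=
  fun x => (hasDerivAt_deriv_soliton hp x).differentiableAt

theorem deriv_soliton_sq (x : ℝ) :
    deriv (soliton p) x ^ 2 = soliton p x ^ 2 - 2 / (p + 1) * soliton p x ^ (p + 1) := by
  have hc := cosh_pos ((p - 1) * x / 2)
  have hp1 : p + 1 ≠ 0 := by linarith
  rw [(hasDerivAt_soliton hp x).deriv, rpow_add_one (soliton_pos hp x).ne', soliton_rpow hp]
  field_simp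
  linear_combination soliton p x ^ 2 * sinh_sq ((p - 1) * x / 2)

end Soliton

theorem stmt9_general (p : ℝ) (hp : 1 < p) (Q : ℝ → ℝ)
    (hQdef : ∀ x, Q x = ((p + 1) / (2 * Real.cosh ((p - 1) * x / 2) ^ 2)) ^ (1 / (p - 1)))
    (ε : ℝ) :
    ∀ x : ℝ, 0 < x →
      -(deriv (deriv (fun y =>
          -(2 / (p - 1)) * (1 + ((p + 1) / 2) * deriv Q y * ∫ r in ε..y, (Q r)⁻¹))) x) +
        (1 - p * Q x ^ (p - 1)) *
          (-(2 / (p - 1)) * (1 + ((p + 1) / 2) * deriv Q x * ∫ r in ε..x, (Q r)⁻¹)) = 1 := by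
  intro x _
  obtain rfl : Q = soliton p := funext hQdef
  exact linearizedOp_preimageOfOne (fun y => (soliton_pos hp y).ne') (differentiable_soliton hp)
    (fun y => (hasDerivAt_deriv_soliton hp y).deriv) (by linarith) (by linarith)
    (differentiable_deriv_soliton hp) (deriv_soliton_sq hp) ε x

theorem stmt9 (p : ℝ) (hp : 1 < p) (Q : ℝ → ℝ)
    (hQdef : ∀ x, Q x = ((p + 1) / (2 * Real.cosh ((p - 1) * x / 2) ^ 2)) ^ (1 / (p - 1)))
    (ε : ℝ) (hε : 0 < ε) :
    ∀ x : ℝ, 0 < x →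
      -(deriv (deriv (fun y =>
          -(2 / (p - 1)) * (1 + ((p + 1) / 2) * deriv Q y * ∫ r in ε..y, (Q r)⁻¹))) x) +
        (1 - p * Q x ^ (p - 1)) *
          (-(2 / (p - 1)) * (1 + ((p + 1) / 2) * deriv Q x * ∫ r in ε..x, (Q r)⁻¹)) = 1 :=
  stmt9_general p hp Q hQdef ε
end

section
/- Let p > 1, Q the soliton of Q'' = Q - Q^p, and define u₃(x) = -(2/(p-1))[1 + ((p+1)/2) Q'(x) ∫_ε^x Q(r)^{-1} dr] for x < -ε < 0. Then u₃(x) → 1 as x → -∞. -/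
/-!
With `u = exp ((p - 1) x)`, the soliton is `Q = exp / w` for the weight
`w = ((1 + u)² / (2 (p + 1))) ^ (1 / (p - 1))`, which tends to a positive constant at `-∞`,
and `Q' / Q = 1 - 2u / (1 + u) → 1`. Hence
`Q'(x) ∫_{-ε}^x Q⁻¹ = -(Q'/Q)(x) · w(x)⁻¹ · eˣ ∫_x^{-ε} e^{-r} w(r) dr`,
where the last factor is an average of `w` over `[x, -ε]` whose mass concentrates near `x`,
so it tends to `lim w`. The product therefore tends to `-1`, and `u₃ → -(2 / (p - 1)) (1 - (p + 1) / 2) = 1`.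
-/

open Real Filter Topology intervalIntegral

theorem exp_mul_integral_exp_neg (x b : ℝ) :
    exp x * ∫ r in x..b, exp (-r) = 1 - exp (x - b) := by
  have h := integral_comp_neg (a := x) (b := b) exp
  simp only [integral_exp] at h
  rw [h, mul_sub, ← exp_add, ← exp_add, sub_eq_add_neg x b]
  simp

theorem tendsto_exp_mul_integral_exp_neg_mul_atBot_of_tendsto_zero {ψ : ℝ → ℝ}
    (hc : Continuous ψ) (hψ : Tendsto ψ atBot (𝓝 0)) (b : ℝ) :
    Tendsto (fun x => exp x * ∫ r in x..b, exp (-r) * ψ r) atBot (𝓝 0) := by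
  have hint : ∀ u v, IntervalIntegrable (fun r => exp (-r) * ψ r) MeasureTheory.volume u v :=
    (continuous_neg.rexp.mul hc).intervalIntegrable
  rw [Metric.tendsto_nhds]
  intro η hη
  obtain ⟨y, hyb, hy⟩ : ∃ y ≤ b, ∀ r ≤ y, |ψ r| ≤ η / 2 := by
    have h := (Metric.tendsto_nhds.1 hψ) (η / 2) (by positivity)
    obtain ⟨y, hy⟩ := eventually_atBot.1 h
    exact ⟨min y b, min_le_right _ _, fun r hr =>
      by simpa using (hy r (hr.trans (min_le_left _ _))).le⟩
  set C := ∫ r in y..b, exp (-r) * ψ r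
  have hC : ∀ᶠ x in atBot, exp x * |C| < η / 2 := by
    have h := tendsto_exp_atBot.mul_const |C|
    rw [zero_mul] at h
    exact h.eventually_lt_const (by positivity)
  filter_upwards [hC, eventually_le_atBot y] with x hxC hxy
  have hnear : |∫ r in x..y, exp (-r) * ψ r| ≤ η / 2 * ∫ r in x..y, exp (-r) := by
    rw [← Real.norm_eq_abs, ← integral_const_mul]
    refine norm_integral_le_of_norm_le hxy (.of_forall fun r hr => ?_)
      ((continuous_const.mul continuous_neg.rexp).intervalIntegrable _ _)
    rw [Real.norm_eq_abs, abs_mul, abs_of_pos (exp_pos _), mul_comm]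
    exact mul_le_mul_of_nonneg_right (hy r hr.2) (exp_pos _).le
  have hsplit : exp x * ∫ r in x..b, exp (-r) * ψ r
      = exp x * (∫ r in x..y, exp (-r) * ψ r) + exp x * C := by
    rw [← integral_add_adjacent_intervals (hint x y) (hint y b), mul_add]
  have hfar : exp x * (η / 2 * ∫ r in x..y, exp (-r)) ≤ η / 2 := by
    rw [mul_left_comm, exp_mul_integral_exp_neg]
    nlinarith [exp_pos (x - y)]
  rw [dist_zero_right, Real.norm_eq_abs, hsplit]
  calc |exp x * (∫ r in x..y, exp (-r) * ψ r) + exp x * C|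
      ≤ exp x * |∫ r in x..y, exp (-r) * ψ r| + exp x * |C| := by
        refine (abs_add_le _ _).trans_eq ?_
        rw [abs_mul, abs_mul, abs_of_pos (exp_pos x)]
    _ < η := by nlinarith [mul_le_mul_of_nonneg_left hnear (exp_pos x).le]

theorem tendsto_exp_mul_integral_exp_neg_mul_atBot {φ : ℝ → ℝ} {L : ℝ}
    (hc : Continuous φ) (hφ : Tendsto φ atBot (𝓝 L)) (b : ℝ) :
    Tendsto (fun x => exp x * ∫ r in x..b, exp (-r) * φ r) atBot (𝓝 L) := by
  have hdecomp : ∀ x, exp x * ∫ r in x..b, exp (-r) * φ r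
      = L * (1 - exp (x - b)) + exp x * ∫ r in x..b, exp (-r) * (φ r - L) := by
    intro x
    have hsub : (fun r => exp (-r) * (φ r - L)) = fun r => exp (-r) * φ r - exp (-r) * L := by
      ext r; ring
    have h1 : IntervalIntegrable (fun r => exp (-r) * φ r) MeasureTheory.volume x b :=
      (continuous_neg.rexp.mul hc).intervalIntegrable x b
    have h2 : IntervalIntegrable (fun r => exp (-r) * L) MeasureTheory.volume x b :=
      (continuous_neg.rexp.mul continuous_const).intervalIntegrable x b
    rw [hsub, integral_sub h1 h2, integral_mul_const,
      ← exp_mul_integral_exp_neg x b]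
    ring
  have hexp : Tendsto (fun x => exp (x - b)) atBot (𝓝 0) :=
    tendsto_exp_atBot.comp (tendsto_atBot_add_const_right _ (-b) tendsto_id)
  have hlin := (hexp.const_sub 1).const_mul L
  rw [sub_zero, mul_one] at hlin
  have hrest := tendsto_exp_mul_integral_exp_neg_mul_atBot_of_tendsto_zero
    (ψ := fun r => φ r - L) (hc.sub continuous_const) (by simpa using hφ.sub_const L) b
  simpa [hdecomp] using hlin.add hrest

theorem tendsto_deriv_mul_integral_inv_atBot {Q φ g : ℝ → ℝ} {L l : ℝ}
    (hφc : Continuous φ) (hφ : Tendsto φ atBot (𝓝 L)) (hL : L ≠ 0) (hQ : ∀ x, Q x = exp x / φ x)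
    (hQ' : ∀ x, deriv Q x = g x * Q x) (hg : Tendsto g atBot (𝓝 l)) (b : ℝ) :
    Tendsto (fun x => deriv Q x * ∫ r in b..x, (Q r)⁻¹) atBot (𝓝 (-l)) := by
  have hQinv : ∀ r, (Q r)⁻¹ = exp (-r) * φ r := fun r => by
    rw [hQ, inv_div, exp_neg, div_eq_mul_inv, mul_comm]
  have heq : ∀ x, deriv Q x * ∫ r in b..x, (Q r)⁻¹
      = -(g x * (φ x)⁻¹ * (exp x * ∫ r in x..b, exp (-r) * φ r)) := fun x => by
    simp only [hQ', hQinv, integral_symm x b, hQ x]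
    ring
  have h :=
    ((hg.mul (hφ.inv₀ hL)).mul (tendsto_exp_mul_integral_exp_neg_mul_atBot hφc hφ b)).neg
  rw [inv_mul_cancel_right₀ hL] at h
  simpa only [heq] using h

theorem hasDerivAt_exp_div {φ : ℝ → ℝ} {k x : ℝ} (hφ : HasDerivAt φ (φ x * k) x)
    (hx : φ x ≠ 0) : HasDerivAt (fun y => exp y / φ y) ((1 - k) * (exp x / φ x)) x := by
  refine ((hasDerivAt_exp x).div hφ hx).congr_deriv ?_
  field_simp

noncomputable def solitonWeight (a c x : ℝ) : ℝ := ((1 + exp (a * x)) ^ 2 / (2 * c)) ^ (1 / a)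

section SolitonWeight

variable {a c : ℝ}

theorem tendsto_exp_mul_atBot (ha : 0 < a) : Tendsto (fun x => exp (a * x)) atBot (𝓝 0) :=
  tendsto_exp_atBot.comp (tendsto_id.const_mul_atBot ha)

theorem rpow_div_two_mul_cosh_sq_eq_exp_div (ha : a ≠ 0) (hc : 0 < c) (x : ℝ) :
    (c / (2 * cosh (a * x / 2) ^ 2)) ^ (1 / a) = exp x / solitonWeight a c x := by
  have hsq : exp (a * x) = exp (a * x / 2) ^ 2 := by rw [← exp_nat_mul]; ring_nf
  have hcosh :
      c / (2 * cosh (a * x / 2) ^ 2) = exp (a * x) / ((1 + exp (a * x)) ^ 2 / (2 * c)) := by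
    rw [cosh_eq, exp_neg, hsq]
    field_simp
    ring
  rw [hcosh, div_rpow (exp_pos _).le (by positivity), ← exp_mul,
    show a * x * (1 / a) = x by field_simp, solitonWeight]

theorem solitonWeight_pos (hc : 0 < c) (x : ℝ) : 0 < solitonWeight a c x := by
  unfold solitonWeight; positivity

theorem continuous_solitonWeight (hc : 0 < c) : Continuous (solitonWeight a c) :=
  (by fun_prop : Continuous fun x => (1 + exp (a * x)) ^ 2 / (2 * c)).rpow_const
    fun x => .inl (by positivity)

theorem tendsto_solitonWeight_atBot (ha : 0 < a) (hc : 0 < c) :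
    Tendsto (solitonWeight a c) atBot (𝓝 ((1 / (2 * c)) ^ (1 / a))) := by
  have h := (((tendsto_exp_mul_atBot ha).const_add 1).pow 2).div_const (2 * c)
    |>.rpow_const (p := 1 / a) (.inl (by positivity))
  convert h using 2 <;> simp [solitonWeight]

theorem hasDerivAt_solitonWeight (ha : a ≠ 0) (hc : 0 < c) (x : ℝ) :
    HasDerivAt (solitonWeight a c)
      (solitonWeight a c x * (2 * exp (a * x) / (1 + exp (a * x)))) x := by
  have hpos : 0 < (1 + exp (a * x)) ^ 2 / (2 * c) := by positivity
  refine (((((hasDerivAt_id' x).const_mul a).exp.const_add 1).fun_pow 2).div_const (2 * c)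
    |>.rpow_const (p := 1 / a) (.inl hpos.ne')).congr_deriv ?_
  rw [rpow_sub_one hpos.ne', solitonWeight]
  field_simp
  ring

end SolitonWeight

theorem stmt12_general (p : ℝ) (hp : 1 < p) (Q : ℝ → ℝ)
    (hQdef : ∀ x, Q x = ((p + 1) / (2 * Real.cosh ((p - 1) * x / 2) ^ 2)) ^ (1 / (p - 1)))
    (ε : ℝ) :
    Tendsto (fun x =>
        -(2 / (p - 1)) * (1 + ((p + 1) / 2) * deriv Q x * ∫ r in (-ε)..x, (Q r)⁻¹))
      atBot (nhds 1) := by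
  have ha : 0 < p - 1 := sub_pos.2 hp
  have hc : 0 < p + 1 := by linarith
  have hQ : ∀ x, Q x = exp x / solitonWeight (p - 1) (p + 1) x := fun x =>
    (hQdef x).trans (rpow_div_two_mul_cosh_sq_eq_exp_div ha.ne' hc x)
  have hQ' : ∀ x, deriv Q x = (1 - 2 * exp ((p - 1) * x) / (1 + exp ((p - 1) * x))) * Q x := by
    intro x
    rw [funext hQ]
    exact (hasDerivAt_exp_div (hasDerivAt_solitonWeight ha.ne' hc x)
      (solitonWeight_pos hc x).ne').deriv
  have hg :
      Tendsto (fun x => 1 - 2 * exp ((p - 1) * x) / (1 + exp ((p - 1) * x))) atBot (𝓝 1) := by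
    have h := (((tendsto_exp_mul_atBot ha).const_mul 2).div
      ((tendsto_exp_mul_atBot ha).const_add 1) (by norm_num)).const_sub 1
    simpa using h
  have hlim := tendsto_deriv_mul_integral_inv_atBot (continuous_solitonWeight hc)
    (tendsto_solitonWeight_atBot ha hc) (by positivity) hQ hQ' hg (-ε)
  convert ((hlim.const_mul ((p + 1) / 2)).const_add 1).const_mul (-(2 / (p - 1))) using 2
  · ring
  · field_simp
    ring

theorem stmt12 (p : ℝ) (hp : 1 < p) (Q : ℝ → ℝ)
    (hQdef : ∀ x, Q x = ((p + 1) / (2 * Real.cosh ((p - 1) * x / 2) ^ 2)) ^ (1 / (p - 1)))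
    (ε : ℝ) (hε : 0 < ε) :
    Tendsto (fun x =>
        -(2 / (p - 1)) * (1 + ((p + 1) / 2) * deriv Q x * ∫ r in (-ε)..x, (Q r)⁻¹))
      atBot (nhds 1) :=
  stmt12_general p hp Q hQdef ε
end

section
/- Let φ₀ ∈ H⁴(ℝ) satisfy ∂ₓ⁴φ₀ - ∂ₓ²φ₀ + ∂ₓ²(pQ^{p-1}φ₀) = λ₀ φ₀ with λ₀ ≠ 0, where Q is the soliton of Q'' = Q - Q^p and p > 1. Then ∫_ℝ φ₀(x) dx = 0 and ∫_ℝ ∫_{-∞}^x φ₀(s) ds dx = 0. -/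
open Real Filter MeasureTheory
open Topology

open Set Topology in
private lemma aux_zero_atTop (f g : ℝ → ℝ) (hd : ∀ x, HasDerivAt f (g x) x)
    (hf : MemLp f 2) (hg : Integrable g) : Tendsto f atTop (𝓝 0) := by
  have h1 : Tendsto f atTop (𝓝 (limUnder atTop f)) :=
    tendsto_limUnder_of_hasDerivAt_of_integrableOn_Ioi (a := 0) (fun x _ => hd x)
      hg.integrableOn
  have h2 : Tendsto (fun x => f x ^ 2) atTop (𝓝 (limUnder atTop f ^ 2)) := h1.pow 2
  have h3 : (limUnder atTop f) ^ 2 = 0 := by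
    refine IntegrableAtFilter.eq_zero_of_tendsto
      ⟨Set.univ, Filter.univ_mem, hf.integrable_sq.integrableOn⟩ ?_ h2
    intro s hs
    obtain ⟨b, hb⟩ := mem_atTop_sets.1 hs
    rw [← top_le_iff, ← Real.volume_Ici (a := b)]
    exact measure_mono hb
  have h4 : limUnder atTop f = 0 := sq_eq_zero_iff.mp h3
  rwa [h4] at h1

open Set Topology in
private lemma aux_zero_atBot (f g : ℝ → ℝ) (hd : ∀ x, HasDerivAt f (g x) x)
    (hf : MemLp f 2) (hg : Integrable g) : Tendsto f atBot (𝓝 0) := by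
  have h1 : Tendsto f atBot (𝓝 (limUnder atBot f)) :=
    tendsto_limUnder_of_hasDerivAt_of_integrableOn_Iic (a := 0) (fun x _ => hd x)
      hg.integrableOn
  have h2 : Tendsto (fun x => f x ^ 2) atBot (𝓝 (limUnder atBot f ^ 2)) := h1.pow 2
  have h3 : (limUnder atBot f) ^ 2 = 0 := by
    refine IntegrableAtFilter.eq_zero_of_tendsto
      ⟨Set.univ, Filter.univ_mem, hf.integrable_sq.integrableOn⟩ ?_ h2
    intro s hs
    obtain ⟨b, hb⟩ := mem_atBot_sets.1 hs
    rw [← top_le_iff, ← Real.volume_Iic (a := b)]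
    exact measure_mono hb
  have h4 : limUnder atBot f = 0 := sq_eq_zero_iff.mp h3
  rwa [h4] at h1

private lemma aux_memL2_mul (m f : ℝ → ℝ) (hm : Continuous m) (C : ℝ)
    (hC : ∀ x, |m x| ≤ C) (hf : MemLp f 2 (volume : Measure ℝ)) :
    MemLp (fun x => m x * f x) 2 := by
  refine MemLp.of_le_mul (c := C) hf
    (hm.aestronglyMeasurable.mul hf.aestronglyMeasurable) (ae_of_all _ fun x => ?_)
  rw [norm_mul]
  exact mul_le_mul_of_nonneg_right ((Real.norm_eq_abs _) ▸ hC x) (norm_nonneg _)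

theorem stmt13 (p : ℝ) (hp : 1 < p) (Q : ℝ → ℝ)
    (hQdef : ∀ x, Q x = ((p + 1) / (2 * Real.cosh ((p - 1) * x / 2) ^ 2)) ^ (1 / (p - 1)))
    (φ₀ : ℝ → ℝ) (lam0 : ℝ) (hlam : lam0 ≠ 0) (hreg : ContDiff ℝ 4 φ₀)
    (hL2 : ∀ k : ℕ, k ≤ 4 → MemLp (iteratedDeriv k φ₀) 2)
    (hint : Integrable φ₀) (hint2 : Integrable (fun x => ∫ s in Set.Iic x, φ₀ s))
    (heig : ∀ x, iteratedDeriv 4 φ₀ x - iteratedDeriv 2 φ₀ x +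
      deriv (deriv (fun y => p * Q y ^ (p - 1) * φ₀ y)) x = lam0 * φ₀ x) :
    (∫ x, φ₀ x) = 0 ∧ (∫ x, ∫ s in Set.Iic x, φ₀ s) = 0 := by
  have hp0 : (0:ℝ) < p - 1 := by linarith
  -- ## the coefficient function m and its derivative
  set m : ℝ → ℝ := fun x => p * ((p + 1) / (2 * Real.cosh ((p - 1) * x / 2) ^ 2)) with hm_def
  set md : ℝ → ℝ := fun x =>
    (p * (p + 1)) * (-(2 * (2 * Real.cosh ((p - 1) * x / 2) ^ 1 *
      (Real.sinh ((p - 1) * x / 2) * ((p - 1) / 2)))) /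
      (2 * Real.cosh ((p - 1) * x / 2) ^ 2) ^ 2) with hmd_def
  have hchpos : ∀ x : ℝ, 0 < Real.cosh ((p - 1) * x / 2) := fun x => Real.cosh_pos _
  have hvne : ∀ x : ℝ, 2 * Real.cosh ((p - 1) * x / 2) ^ 2 ≠ 0 := by
    intro x; have := hchpos x; positivity
  -- Q-power collapses
  have hQpow : (fun y => p * Q y ^ (p - 1) * φ₀ y) = fun y => m y * φ₀ y := by
    funext x
    have hapos : 0 < (p + 1) / (2 * Real.cosh ((p - 1) * x / 2) ^ 2) := by
      have := hchpos x
      apply div_pos (by linarith) (by positivity)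
    rw [hQdef x, ← Real.rpow_mul hapos.le, one_div_mul_cancel (ne_of_gt hp0),
      Real.rpow_one]
  -- derivative of m
  have hu : ∀ x : ℝ, HasDerivAt (fun y => (p - 1) * y / 2) ((p - 1) / 2) x := by
    intro x
    simpa using (((hasDerivAt_id x).const_mul (p - 1)).div_const 2)
  have hcoshd : ∀ x : ℝ, HasDerivAt (fun y => Real.cosh ((p - 1) * y / 2))
      (Real.sinh ((p - 1) * x / 2) * ((p - 1) / 2)) x := fun x =>
    (Real.hasDerivAt_cosh _).comp x (hu x)
  have hv : ∀ x : ℝ, HasDerivAt (fun y => 2 * Real.cosh ((p - 1) * y / 2) ^ 2)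
      (2 * (2 * Real.cosh ((p - 1) * x / 2) ^ 1 *
        (Real.sinh ((p - 1) * x / 2) * ((p - 1) / 2)))) x := fun x =>
    ((hcoshd x).pow 2).const_mul 2
  have hmd : ∀ x : ℝ, HasDerivAt m (md x) x := by
    intro x
    have h1 := ((hv x).inv (hvne x)).const_mul (p * (p + 1))
    have heq : m = fun y => (p * (p + 1)) * (2 * Real.cosh ((p - 1) * y / 2) ^ 2)⁻¹ := by
      funext y; rw [hm_def]; rw [div_eq_mul_inv]; ring
    rw [heq, hmd_def]
    exact h1
  -- smoothness
  have hlin : ContDiff ℝ (⊤ : ℕ∞) (fun x : ℝ => (p - 1) * x / 2) :=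
    (contDiff_const.mul contDiff_id).div_const 2
  have hchC : ContDiff ℝ (⊤ : ℕ∞) (fun x : ℝ => Real.cosh ((p - 1) * x / 2)) :=
    Real.contDiff_cosh.comp hlin
  have hshC : ContDiff ℝ (⊤ : ℕ∞) (fun x : ℝ => Real.sinh ((p - 1) * x / 2)) :=
    Real.contDiff_sinh.comp hlin
  have hmC : ContDiff ℝ (⊤ : ℕ∞) m :=
    contDiff_const.mul (contDiff_const.div (contDiff_const.mul (hchC.pow 2)) hvne)
  have hmdC : ContDiff ℝ (⊤ : ℕ∞) md := by
    apply contDiff_const.mul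
    apply ContDiff.div
    · exact (contDiff_const.mul ((contDiff_const.mul (hchC.pow 1)).mul
        (hshC.mul contDiff_const))).neg
    · exact (contDiff_const.mul (hchC.pow 2)).pow 2
    · intro x; have := hvne x; positivity
  -- bounds
  have hmbd : ∀ x, |m x| ≤ p * (p + 1) / 2 := by
    intro x
    have h1 := hchpos x
    have h2 := Real.one_le_cosh ((p - 1) * x / 2)
    rw [hm_def]
    rw [abs_of_pos (by positivity : (0:ℝ) < p * ((p + 1) / (2 * Real.cosh ((p - 1) * x / 2) ^ 2)))]
    rw [show p * ((p + 1) / (2 * Real.cosh ((p - 1) * x / 2) ^ 2))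
      = p * (p + 1) / (2 * Real.cosh ((p - 1) * x / 2) ^ 2) from by ring]
    apply div_le_div_of_nonneg_left (by nlinarith) (by norm_num)
    nlinarith
  have hmdbd : ∀ x, |md x| ≤ p * (p + 1) * ((p - 1) / 2) := by
    intro x
    set u := (p - 1) * x / 2 with hu'
    have hch : 1 ≤ Real.cosh u := Real.one_le_cosh u
    have hsh : |Real.sinh u| ≤ Real.cosh u := by
      nlinarith [Real.cosh_sq u, abs_nonneg (Real.sinh u), sq_abs (Real.sinh u),
        Real.cosh_pos u]
    have hden : (0:ℝ) < (2 * Real.cosh u ^ 2) ^ 2 := by positivity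
    rw [hmd_def]
    show |(p * (p + 1)) * (-(2 * (2 * Real.cosh u ^ 1 * (Real.sinh u * ((p - 1) / 2)))) /
      (2 * Real.cosh u ^ 2) ^ 2)| ≤ p * (p + 1) * ((p - 1) / 2)
    rw [abs_mul, abs_div, abs_of_pos hden,
      abs_of_pos (by nlinarith : (0:ℝ) < p * (p + 1))]
    have hnum : |(-(2 * (2 * Real.cosh u ^ 1 * (Real.sinh u * ((p - 1) / 2)))))|
        ≤ ((p - 1) / 2) * (2 * Real.cosh u ^ 2) ^ 2 := by
      rw [abs_neg]
      have h1 : |(2 * (2 * Real.cosh u ^ 1 * (Real.sinh u * ((p - 1) / 2))))|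
          = 4 * Real.cosh u * |Real.sinh u| * ((p - 1) / 2) := by
        rw [abs_mul, abs_mul, abs_mul, abs_mul, pow_one,
          abs_of_pos (by norm_num : (0:ℝ) < 2),
          abs_of_pos (Real.cosh_pos u),
          abs_of_pos (by linarith : (0:ℝ) < (p - 1) / 2)]
        ring
      rw [h1]
      have e1 : 4 * Real.cosh u * |Real.sinh u| ≤ 4 * Real.cosh u ^ 2 := by
        nlinarith [Real.cosh_pos u]
      have e2 : Real.cosh u ^ 2 ≤ Real.cosh u ^ 4 := by
        nlinarith [sq_nonneg (Real.cosh u ^ 2 - Real.cosh u), sq_nonneg (Real.cosh u - 1),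
          sq_nonneg (Real.cosh u + 1), Real.cosh_pos u]
      have hd2 : (0:ℝ) < (p - 1) / 2 := by linarith
      nlinarith [abs_nonneg (Real.sinh u), Real.cosh_pos u]
    calc p * (p + 1) * (|(-(2 * (2 * Real.cosh u ^ 1 * (Real.sinh u * ((p - 1) / 2)))))| /
          (2 * Real.cosh u ^ 2) ^ 2)
        ≤ p * (p + 1) * (((p - 1) / 2) * (2 * Real.cosh u ^ 2) ^ 2 /
          (2 * Real.cosh u ^ 2) ^ 2) := by
          have hKpos : (0:ℝ) ≤ p * (p + 1) := by nlinarith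
          gcongr
      _ = p * (p + 1) * ((p - 1) / 2) := by
          rw [mul_div_assoc, div_self (ne_of_gt hden)]; ring
  -- ## derivatives of φ₀
  have hφd : ∀ k : ℕ, k < 4 → ∀ x, HasDerivAt (iteratedDeriv k φ₀)
      (iteratedDeriv (k + 1) φ₀ x) x := by
    intro k hk x
    have h1 : DifferentiableAt ℝ (iteratedDeriv k φ₀) x := by
      exact (hreg.differentiable_iteratedDeriv k (by exact_mod_cast hk)).differentiableAt
    have h2 : iteratedDeriv (k + 1) φ₀ x = deriv (iteratedDeriv k φ₀) x := by
      rw [iteratedDeriv_succ]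
    rw [h2]
    exact h1.hasDerivAt
  have hφ0d : ∀ x, HasDerivAt φ₀ (iteratedDeriv 1 φ₀ x) x := by
    intro x
    have := hφd 0 (by norm_num) x
    rwa [iteratedDeriv_zero] at this
  have hL2' : ∀ k : ℕ, k ≤ 4 → MemLp (iteratedDeriv k φ₀) 2 := hL2
  have hφ₀L2 : MemLp φ₀ 2 := by have := hL2 0 (by norm_num); rwa [iteratedDeriv_zero] at this
  -- ## W and its derivative
  set W : ℝ → ℝ := fun x => m x * φ₀ x with hW_def
  set Wd : ℝ → ℝ := fun x => md x * φ₀ x + m x * iteratedDeriv 1 φ₀ x with hWd_def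
  have hWd : ∀ x, HasDerivAt W (Wd x) x := fun x => (hmd x).mul (hφ0d x)
  have hWdd : ∀ x, HasDerivAt Wd (deriv Wd x) x := by
    intro x
    apply DifferentiableAt.hasDerivAt
    apply DifferentiableAt.add
    · exact (hmdC.differentiable (by simp) _).mul ((hreg.differentiable (by norm_num)) _)
    · exact (hmC.differentiable (by simp) _).mul
        ((hreg.differentiable_iteratedDeriv 1 (by norm_num)) _)
  -- F and Fd
  set F : ℝ → ℝ := fun x => iteratedDeriv 2 φ₀ x - φ₀ x + W x with hF_def
  set Fd : ℝ → ℝ := fun x => iteratedDeriv 3 φ₀ x - iteratedDeriv 1 φ₀ x + Wd x with hFd_def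
  have hFderiv : ∀ x, HasDerivAt F (Fd x) x := by
    intro x
    exact ((hφd 2 (by norm_num) x).sub (hφ0d x)).add (hWd x)
  have hderivWd_eq : ∀ x, deriv Wd x =
      deriv (deriv (fun y => p * Q y ^ (p - 1) * φ₀ y)) x := by
    intro x
    congr 1
    funext y
    rw [hQpow]
    exact ((hWd y).deriv).symm
  have hFdderiv : ∀ x, HasDerivAt Fd (lam0 * φ₀ x) x := by
    intro x
    have h1 : HasDerivAt Fd (iteratedDeriv 4 φ₀ x - iteratedDeriv 2 φ₀ x + deriv Wd x) x := by
      have h2 := hφd 3 (by norm_num) x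
      have h3 := hφd 1 (by norm_num) x
      exact (h2.sub h3).add (hWdd x)
    rwa [hderivWd_eq x, heig x] at h1
  -- ## Memℒp facts
  have hWL2 : MemLp W 2 :=
    aux_memL2_mul m φ₀ (hmC.continuous) _ hmbd hφ₀L2
  have hWdL2 : MemLp Wd 2 := by
    apply MemLp.add
    · exact aux_memL2_mul md φ₀ (hmdC.continuous) _ hmdbd hφ₀L2
    · exact aux_memL2_mul m (iteratedDeriv 1 φ₀) (hmC.continuous) _ hmbd
        (hL2 1 (by norm_num))
  have hFL2 : MemLp F 2 := ((hL2 2 (by norm_num)).sub hφ₀L2).add hWL2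
  have hFdL2 : MemLp Fd 2 := ((hL2 3 (by norm_num)).sub (hL2 1 (by norm_num))).add hWdL2
  -- ## the antiderivative Φ
  set Φ : ℝ → ℝ := fun x => ∫ s in Set.Iic x, φ₀ s with hΦ_def
  have hΦd : ∀ x, HasDerivAt Φ (φ₀ x) x := by
    intro x
    have key : Φ = fun x => Φ 0 + ∫ t in (0:ℝ)..x, φ₀ t := by
      funext y
      have := intervalIntegral.integral_Iic_sub_Iic (hint.integrableOn) (hint.integrableOn)
        (a := (0:ℝ)) (b := y)
      simp only [hΦ_def]
      linarith [this]
    have hG : HasDerivAt (fun y => ∫ t in (0:ℝ)..y, φ₀ t) (φ₀ x) x := by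
      apply intervalIntegral.integral_hasDerivAt_right
        (hint.intervalIntegrable)
        (hreg.continuous.stronglyMeasurableAtFilter _ _)
        (hreg.continuous.continuousAt)
    rw [key]
    simpa using hG.const_add (Φ 0)
  have hΦtop : Tendsto Φ atTop (𝓝 0) :=
    tendsto_zero_of_hasDerivAt_of_integrableOn_Ioi (a := 0) (fun x _ => hΦd x)
      hint.integrableOn hint2.integrableOn
  have hΦbot : Tendsto Φ atBot (𝓝 0) :=
    tendsto_zero_of_hasDerivAt_of_integrableOn_Iic (a := 0) (fun x _ => hΦd x)
      hint.integrableOn hint2.integrableOn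
  -- ## Part 1
  have part1 : (∫ x, φ₀ x) = 0 := by
    have h10 : ∫ x in Set.Ioi (0:ℝ), φ₀ x = 0 - Φ 0 :=
      integral_Ioi_of_hasDerivAt_of_tendsto' (fun x _ => hΦd x) hint.integrableOn hΦtop
    have h11 : ∫ x in Set.Iic (0:ℝ), φ₀ x = Φ 0 := rfl
    have h12 := intervalIntegral.integral_Iic_add_Ioi (b := (0:ℝ))
      hint.integrableOn hint.integrableOn
    rw [h10, h11] at h12
    linarith
  -- ## Fd = lam0 * Φ
  have hconst : ∀ x, Fd x - lam0 * Φ x = Fd 0 - lam0 * Φ 0 := by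
    intro x
    have hdiff : Differentiable ℝ (fun x => Fd x - lam0 * Φ x) := by
      intro y
      exact ((hFdderiv y).sub ((hΦd y).const_mul lam0)).differentiableAt
    have hzero : ∀ y, deriv (fun x => Fd x - lam0 * Φ x) y = 0 := by
      intro y
      have h : HasDerivAt (fun x => Fd x - lam0 * Φ x) (lam0 * φ₀ y - lam0 * φ₀ y) y :=
        (hFdderiv y).sub ((hΦd y).const_mul lam0)
      simpa using h.deriv
    exact is_const_of_deriv_eq_zero hdiff hzero x 0
  have hC0 : Fd 0 - lam0 * Φ 0 = 0 := by
    have hFdbot : Tendsto Fd atBot (𝓝 0) :=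
      aux_zero_atBot Fd (fun x => lam0 * φ₀ x) hFdderiv hFdL2 (hint.const_mul lam0)
    have h1 : Tendsto (fun x => Fd x - lam0 * Φ x) atBot (𝓝 (0 - lam0 * 0)) :=
      hFdbot.sub (hΦbot.const_mul lam0)
    have h2 : Tendsto (fun x => Fd x - lam0 * Φ x) atBot (𝓝 (Fd 0 - lam0 * Φ 0)) := by
      have : (fun x => Fd x - lam0 * Φ x) = fun _ => Fd 0 - lam0 * Φ 0 := funext hconst
      rw [this]
      exact tendsto_const_nhds
    have := tendsto_nhds_unique h2 h1
    simpa using this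
  have hFdΦ : ∀ x, Fd x = lam0 * Φ x := by
    intro x
    have := hconst x
    linarith [hC0]
  -- ## Part 2
  have hFdint : Integrable Fd := by
    have : Integrable (fun x => lam0 * Φ x) := hint2.const_mul lam0
    exact this.congr (ae_of_all _ fun x => (hFdΦ x).symm)
  have hFtop : Tendsto F atTop (𝓝 0) := aux_zero_atTop F Fd hFderiv hFL2 hFdint
  have hFbot : Tendsto F atBot (𝓝 0) := aux_zero_atBot F Fd hFderiv hFL2 hFdint
  have part2 : (∫ x, Φ x) = 0 := by
    have h20 : ∫ x in Set.Ioi (0:ℝ), Fd x = 0 - F 0 :=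
      integral_Ioi_of_hasDerivAt_of_tendsto' (fun x _ => hFderiv x) hFdint.integrableOn hFtop
    have h21 : ∫ x in Set.Iic (0:ℝ), Fd x = F 0 - 0 :=
      integral_Iic_of_hasDerivAt_of_tendsto' (fun x _ => hFderiv x) hFdint.integrableOn hFbot
    have h22 := intervalIntegral.integral_Iic_add_Ioi (b := (0:ℝ))
      hFdint.integrableOn hFdint.integrableOn
    rw [h20, h21] at h22
    have h23 : (∫ x, Fd x) = 0 := by linarith
    have h24 : (∫ x, Fd x) = lam0 * ∫ x, Φ x := by
      rw [show Fd = fun x => lam0 * Φ x from funext hFdΦ]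
      exact integral_const_mul lam0 Φ
    rw [h24] at h23
    exact (mul_eq_zero.mp h23).resolve_left hlam
  exact ⟨part1, part2⟩
end

section
/- Let ν₀ > 0 and K > 0, and let β₊, β₋, β_c : [0,T] → [0,∞) be C¹ functions satisfying |β_c'| + |β₊' - 2ν₀β₊| + |β₋' + 2ν₀β₋| ≤ Kδ(β_c + β₊ + β₋) on [0,T], where δ > 0 satisfies Kδ ≤ ν₀/5. Assume 0 < Kδ(β_c(0)+β₊(0)+β₋(0)) < (ν₀/10)β₊(0) and that the bootstrap bound Kδ(β_c+β₊+β₋) ≤ ν₀β₊ holds on [0,T]. Then β₊ is positive and satisfies β₊'(t) ≥ ν₀β₊(t) for all t ∈ [0,T]; in particular β₊(t) ≥ e^{ν₀ t}β₊(0). -/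
/-!
The bootstrap bound absorbs the whole perturbation into the `β₊` equation:
`|β₊' - 2ν₀β₊| ≤ Kδ(β_c + β₊ + β₋) ≤ ν₀β₊`, hence `β₊' ≥ ν₀β₊`. Then `e^{-ν₀t}β₊(t)` has nonnegative
derivative, so it is monotone, which is the exponential lower bound; positivity of `β₊(0)` comes
from the initial smallness condition `0 < Kδ(…)(0) < (ν₀/10)β₊(0)`.
-/

open Real Filter Set

lemma le_of_abs_sub_two_mul_le {ν x d : ℝ} (h : |d - 2 * ν * x| ≤ ν * x) : ν * x ≤ d := by
  linarith [(abs_le.mp h).1]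

lemma hasDerivAt_exp_neg_mul_mul {f : ℝ → ℝ} {ν t : ℝ} (hf : DifferentiableAt ℝ f t) :
    HasDerivAt (fun s => exp (-ν * s) * f s) (exp (-ν * t) * (deriv f t - ν * f t)) t := by
  have hexp : HasDerivAt (fun s => exp (-ν * s)) (exp (-ν * t) * -ν) t := by
    simpa using ((hasDerivAt_id t).const_mul (-ν)).exp
  exact (hexp.mul hf.hasDerivAt).congr_deriv (by ring)

lemma monotoneOn_exp_neg_mul_mul {f : ℝ → ℝ} {ν a b : ℝ} (hf : ContinuousOn f (Icc a b))
    (hf' : ∀ t ∈ Ioo a b, DifferentiableAt ℝ f t) (h : ∀ t ∈ Ioo a b, ν * f t ≤ deriv f t) :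
    MonotoneOn (fun s => exp (-ν * s) * f s) (Icc a b) := by
  refine monotoneOn_of_deriv_nonneg (convex_Icc a b)
    ((continuous_exp.comp (continuous_const.mul continuous_id)).continuousOn.mul hf) ?_ ?_
  · rw [interior_Icc]
    exact fun t ht => (hasDerivAt_exp_neg_mul_mul (hf' t ht)).differentiableAt.differentiableWithinAt
  · rw [interior_Icc]
    intro t ht
    rw [(hasDerivAt_exp_neg_mul_mul (hf' t ht)).deriv]
    exact mul_nonneg (exp_pos _).le (sub_nonneg.mpr (h t ht))

lemma exp_mul_sub_mul_le_of_mul_le_deriv {f : ℝ → ℝ} {ν a b : ℝ} (hf : ContinuousOn f (Icc a b))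
    (hf' : ∀ t ∈ Ioo a b, DifferentiableAt ℝ f t) (h : ∀ t ∈ Ioo a b, ν * f t ≤ deriv f t)
    {t : ℝ} (ht : t ∈ Icc a b) : exp (ν * (t - a)) * f a ≤ f t := by
  have hmono : exp (-ν * a) * f a ≤ exp (-ν * t) * f t :=
    monotoneOn_exp_neg_mul_mul hf hf' h (left_mem_Icc.mpr (ht.1.trans ht.2)) ht ht.1
  calc exp (ν * (t - a)) * f a = exp (ν * t) * (exp (-ν * a) * f a) := by
        rw [← mul_assoc, ← exp_add]; ring_nf
    _ ≤ exp (ν * t) * (exp (-ν * t) * f t) := mul_le_mul_of_nonneg_left hmono (exp_pos _).le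
    _ = f t := by rw [← mul_assoc, ← exp_add]; ring_nf; rw [exp_zero, one_mul]

theorem stmt17_general (ν₀ K δ T : ℝ) (hν : 0 < ν₀)
    (βp βm βc : ℝ → ℝ)
    (hd : ∀ t ∈ Set.Icc (0 : ℝ) T,
      DifferentiableAt ℝ βp t ∧ DifferentiableAt ℝ βm t ∧ DifferentiableAt ℝ βc t)
    (hineq : ∀ t ∈ Set.Icc (0 : ℝ) T,
      |deriv βc t| + |deriv βp t - 2 * ν₀ * βp t| + |deriv βm t + 2 * ν₀ * βm t| ≤
        K * δ * (βc t + βp t + βm t))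
    (hinit0 : 0 < K * δ * (βc 0 + βp 0 + βm 0))
    (hinit1 : K * δ * (βc 0 + βp 0 + βm 0) < ν₀ / 10 * βp 0)
    (hboot : ∀ t ∈ Set.Icc (0 : ℝ) T, K * δ * (βc t + βp t + βm t) ≤ ν₀ * βp t) :
    ∀ t ∈ Set.Icc (0 : ℝ) T,
      0 < βp t ∧ ν₀ * βp t ≤ deriv βp t ∧ Real.exp (ν₀ * t) * βp 0 ≤ βp t := by
  have hβp0 : 0 < βp 0 := pos_of_mul_pos_right (hinit0.trans hinit1) (by positivity)
  have hgrowth : ∀ t ∈ Icc (0 : ℝ) T, ν₀ * βp t ≤ deriv βp t := fun t ht =>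
    le_of_abs_sub_two_mul_le <| by
      linarith [hineq t ht, hboot t ht, abs_nonneg (deriv βc t),
        abs_nonneg (deriv βm t + 2 * ν₀ * βm t)]
  intro t ht
  have hlower : exp (ν₀ * t) * βp 0 ≤ βp t := by
    simpa using exp_mul_sub_mul_le_of_mul_le_deriv
      (fun s hs => (hd s hs).1.continuousAt.continuousWithinAt)
      (fun s hs => (hd s (Ioo_subset_Icc_self hs)).1)
      (fun s hs => hgrowth s (Ioo_subset_Icc_self hs)) ht
  exact ⟨(by positivity : 0 < exp (ν₀ * t) * βp 0).trans_le hlower, hgrowth t ht, hlower⟩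

theorem stmt17 (ν₀ K δ T : ℝ) (hν : 0 < ν₀) (hK : 0 < K) (hδ : 0 < δ)
    (hKδ : K * δ ≤ ν₀ / 5) (hT : 0 ≤ T) (βp βm βc : ℝ → ℝ)
    (hnn : ∀ t ∈ Set.Icc (0 : ℝ) T, 0 ≤ βp t ∧ 0 ≤ βm t ∧ 0 ≤ βc t)
    (hd : ∀ t ∈ Set.Icc (0 : ℝ) T,
      DifferentiableAt ℝ βp t ∧ DifferentiableAt ℝ βm t ∧ DifferentiableAt ℝ βc t)
    (hineq : ∀ t ∈ Set.Icc (0 : ℝ) T,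
      |deriv βc t| + |deriv βp t - 2 * ν₀ * βp t| + |deriv βm t + 2 * ν₀ * βm t| ≤
        K * δ * (βc t + βp t + βm t))
    (hinit0 : 0 < K * δ * (βc 0 + βp 0 + βm 0))
    (hinit1 : K * δ * (βc 0 + βp 0 + βm 0) < ν₀ / 10 * βp 0)
    (hboot : ∀ t ∈ Set.Icc (0 : ℝ) T, K * δ * (βc t + βp t + βm t) ≤ ν₀ * βp t) :
    ∀ t ∈ Set.Icc (0 : ℝ) T,
      0 < βp t ∧ ν₀ * βp t ≤ deriv βp t ∧ Real.exp (ν₀ * t) * βp 0 ≤ βp t :=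
  stmt17_general ν₀ K δ T hν βp βm βc hd hineq hinit0 hinit1 hboot
end
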